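/- Let p ≥ 1, let K ⊆ ℝ^p be a bounded convex set with nonempty interior, let g₁, g₂ : ℝ → ℝ be continuous monotone nondecreasing functions, let β₁, β₂ ∈ ℝ^p satisfy ‖β₁‖ = ‖β₂‖ = 1, and let a₁, a₂ ∈ ℝ. Suppose the map x ↦ g₁(⟪β₁, x⟫) is not constant on K, and that for every x ∈ K both g₁(⟪β₁, x⟫) = g₂(⟪β₂, x⟫) and a₁·g₁(⟪β₁, x⟫) = a₂·g₂(⟪β₂, x⟫) hold. If in addition g₁(t₀) = 0 for some t₀ ∈ {⟪β₁, x⟫ : x ∈ K}, then β₁ = β₂, g₁ = g₂ on the set {⟪β₁, x⟫ : x ∈ K}, and a₁ = a₂. -/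

import Mathlib

/-!
If `β₁ ≠ β₂` are unit vectors, moving along `w = β₁ - β₂` increases `⟪β₁, x⟫` and decreases
`⟪β₂, x⟫`. Since `x ↦ g₁ ⟪β₁, x⟫ = g₂ ⟪β₂, x⟫` is monotone in both, it is locally constant on the
interior of `K`, hence constant on the connected set `interior K` and, by continuity, on `K`:
this contradicts non-constancy. Once `β₁ = β₂`, the link functions agree on the index range, and
`a₁ = a₂` follows by cancelling a nonzero value of `g₁`.
-/

open Filter Topology
open scoped RealInnerProductSpace

lemma IsPreconnected.apply_eq_of_eventually_eq {X Y : Type*} [TopologicalSpace X] {s : Set X}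
    (hs : IsPreconnected s) {f : X → Y} (hf : ∀ x ∈ s, ∀ᶠ y in 𝓝 x, f y = f x)
    {x y : X} (hx : x ∈ s) (hy : y ∈ s) : f x = f y :=
  hs.induction₂ (fun a b => f a = f b)
    (fun a ha => ((hf a ha).filter_mono nhdsWithin_le_nhds).mono fun _ h => h.symm)
    (fun _ _ _ _ _ _ => Eq.trans) (fun _ _ _ _ => Eq.symm) hx hy

lemma Monotone.eventually_eq_of_eq {g : ℝ → ℝ} (hg : Monotone g) {a b m : ℝ}
    (ham : a < m) (hmb : m < b) (hab : g a = g b) : ∀ᶠ s in 𝓝 m, g s = g m := by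
  filter_upwards [Icc_mem_nhds ham hmb] with s hs
  have hgs : g s ≤ g m := calc
    g s ≤ g b := hg hs.2
    _ = g a := hab.symm
    _ ≤ g m := hg ham.le
  have hgm : g m ≤ g s := calc
    g m ≤ g b := hg hmb.le
    _ = g a := hab.symm
    _ ≤ g s := hg hs.1
  exact le_antisymm hgs hgm

section InnerProductSpace

variable {E : Type*} [NormedAddCommGroup E] [InnerProductSpace ℝ E]

lemma inner_sub_pos_and_neg_of_norm_eq {β₁ β₂ : E} (h : ‖β₁‖ = ‖β₂‖) (hne : β₁ ≠ β₂) :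
    0 < ⟪β₁, β₁ - β₂⟫ ∧ ⟪β₂, β₁ - β₂⟫ < 0 := by
  have hpos : 0 < ‖β₁ - β₂‖ ^ 2 := by positivity [sub_ne_zero.mpr hne]
  have hdiff : ⟪β₁, β₁ - β₂⟫ - ⟪β₂, β₁ - β₂⟫ = ‖β₁ - β₂‖ ^ 2 := by
    rw [← inner_sub_left, real_inner_self_eq_norm_sq]
  have hsum : ⟪β₁, β₁ - β₂⟫ + ⟪β₂, β₁ - β₂⟫ = 0 := by
    rw [inner_sub_right, inner_sub_right, real_inner_self_eq_norm_sq,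
      real_inner_self_eq_norm_sq, real_inner_comm, h]
    ring
  constructor <;> linarith

lemma exists_pos_add_smul_mem_and_sub_smul_mem {K : Set E} {u : E} (hu : u ∈ interior K) (w : E) :
    ∃ τ : ℝ, 0 < τ ∧ u - τ • w ∈ K ∧ u + τ • w ∈ K := by
  have hK : K ∈ 𝓝 u := mem_interior_iff_mem_nhds.mp hu
  have hsub : ∀ᶠ r : ℝ in 𝓝 0, u - r • w ∈ K :=
    (Continuous.tendsto' (by fun_prop) 0 u (by simp)).eventually hK
  have hadd : ∀ᶠ r : ℝ in 𝓝 0, u + r • w ∈ K :=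
    (Continuous.tendsto' (by fun_prop) 0 u (by simp)).eventually hK
  obtain ⟨τ, ⟨hτsub, hτadd⟩, hτ⟩ :=
    (((hsub.and hadd).filter_mono nhdsWithin_le_nhds).and
      (self_mem_nhdsWithin (s := Set.Ioi (0 : ℝ)))).exists
  exact ⟨τ, hτ, hτsub, hτadd⟩

variable {K : Set E} {g₁ g₂ : ℝ → ℝ} {β₁ β₂ w : E}

lemma eventually_eq_of_comp_inner_eq_of_mem_interior (hg₁m : Monotone g₁) (hg₂m : Monotone g₂)
    (hw₁ : 0 < ⟪β₁, w⟫) (hw₂ : ⟪β₂, w⟫ ≤ 0) (heq : ∀ x ∈ K, g₁ ⟪β₁, x⟫ = g₂ ⟪β₂, x⟫)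
    {u : E} (hu : u ∈ interior K) : ∀ᶠ s in 𝓝 ⟪β₁, u⟫, g₁ s = g₁ ⟪β₁, u⟫ := by
  obtain ⟨τ, hτ, hsub, hadd⟩ := exists_pos_add_smul_mem_and_sub_smul_mem hu w
  have hstep₁ : 0 < τ * ⟪β₁, w⟫ := mul_pos hτ hw₁
  have hstep₂ : τ * ⟪β₂, w⟫ ≤ 0 := mul_nonpos_of_nonneg_of_nonpos hτ.le hw₂
  have h₁ := heq _ hsub
  have h₂ := heq _ hadd
  simp only [inner_sub_right, inner_add_right, real_inner_smul_right] at h₁ h₂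
  -- from `u - τ • w` to `u + τ • w`, `g₁ ⟪β₁, ·⟫` cannot decrease and `g₂ ⟪β₂, ·⟫` cannot increase
  have hends : g₁ (⟪β₁, u⟫ - τ * ⟪β₁, w⟫) = g₁ (⟪β₁, u⟫ + τ * ⟪β₁, w⟫) := by
    refine le_antisymm (hg₁m (by linarith)) ?_
    rw [h₁, h₂]
    exact hg₂m (by linarith)
  exact hg₁m.eventually_eq_of_eq (by linarith) (by linarith) hends

lemma exists_forall_comp_inner_eq_of_inner_pos_of_inner_nonpos (hKconv : Convex ℝ K)
    (hKint : (interior K).Nonempty) (hg₁c : Continuous g₁) (hg₁m : Monotone g₁)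
    (hg₂m : Monotone g₂) (hw₁ : 0 < ⟪β₁, w⟫) (hw₂ : ⟪β₂, w⟫ ≤ 0)
    (heq : ∀ x ∈ K, g₁ ⟪β₁, x⟫ = g₂ ⟪β₂, x⟫) : ∃ c : ℝ, ∀ x ∈ K, g₁ ⟪β₁, x⟫ = c := by
  obtain ⟨u₀, hu₀⟩ := hKint
  have hinner : Continuous fun x : E => ⟪β₁, x⟫ := continuous_const.inner continuous_id
  have hFc : Continuous fun x => g₁ ⟪β₁, x⟫ := hg₁c.comp hinner
  have hloc : ∀ v ∈ interior K, ∀ᶠ y in 𝓝 v, g₁ ⟪β₁, y⟫ = g₁ ⟪β₁, v⟫ := fun v hv =>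
    (hinner.tendsto v).eventually
      (eventually_eq_of_comp_inner_eq_of_mem_interior hg₁m hg₂m hw₁ hw₂ heq hv)
  have hFint : Set.EqOn (fun x => g₁ ⟪β₁, x⟫) (fun _ => g₁ ⟪β₁, u₀⟫) (interior K) :=
    fun u hu => hKconv.interior.isPreconnected.apply_eq_of_eventually_eq hloc hu hu₀
  refine ⟨g₁ ⟪β₁, u₀⟫, fun x hx => hFint.closure hFc continuous_const ?_⟩
  rw [hKconv.closure_interior_eq_closure_of_nonempty_interior ⟨u₀, hu₀⟩]
  exact subset_closure hx

end InnerProductSpace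

theorem stacked_single_index_identifiability_general
    (p : ℕ)
    (K : Set (EuclideanSpace ℝ (Fin p)))
    (hKconv : Convex ℝ K)
    (hKint : (interior K).Nonempty)
    (g₁ g₂ : ℝ → ℝ) (hg₁c : Continuous g₁)
    (hg₁m : Monotone g₁) (hg₂m : Monotone g₂)
    (β₁ β₂ : EuclideanSpace ℝ (Fin p)) (hβ₁ : ‖β₁‖ = 1) (hβ₂ : ‖β₂‖ = 1)
    (a₁ a₂ : ℝ)
    (hnc : ¬ ∃ c : ℝ, ∀ x ∈ K, g₁ ⟪β₁, x⟫ = c)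
    (heq : ∀ x ∈ K, g₁ ⟪β₁, x⟫ = g₂ ⟪β₂, x⟫)
    (heqa : ∀ x ∈ K, a₁ * g₁ ⟪β₁, x⟫ = a₂ * g₂ ⟪β₂, x⟫) :
    β₁ = β₂ ∧ (∀ t ∈ (fun x => ⟪β₁, x⟫) '' K, g₁ t = g₂ t) ∧ a₁ = a₂ := by
  have hβ : β₁ = β₂ := by
    by_contra hne
    obtain ⟨hw₁, hw₂⟩ := inner_sub_pos_and_neg_of_norm_eq (hβ₁.trans hβ₂.symm) hne
    exact hnc (exists_forall_comp_inner_eq_of_inner_pos_of_inner_nonpos hKconv hKint hg₁c hg₁m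
      hg₂m hw₁ hw₂.le heq)
  refine ⟨hβ, ?_, ?_⟩
  · rintro _ ⟨x, hx, rfl⟩
    rw [heq x hx, hβ]
  · push Not at hnc
    obtain ⟨x, hx, hx0⟩ := hnc 0
    exact mul_right_cancel₀ hx0 (by rw [heqa x hx, heq x hx])

/-- Identifiability of the stacked fixed effects `(β, g, a)` of
the ST-GP model. Under the same hypotheses as the single-index identifiability,
if additionally `a₁·g₁⟪β₁, x⟫ = a₂·g₂⟪β₂, x⟫` on `K` and `g₁` vanishes at some
point `t₀` of `{⟪β₁, x⟫ : x ∈ K}`, then `β₁ = β₂`, `g₁ = g₂` on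
`{⟪β₁, x⟫ : x ∈ K}`, and `a₁ = a₂`. -/
theorem stacked_single_index_identifiability
    (p : ℕ) (hp : 1 ≤ p)
    (K : Set (EuclideanSpace ℝ (Fin p)))
    (hKbdd : Bornology.IsBounded K) (hKconv : Convex ℝ K)
    (hKint : (interior K).Nonempty)
    (g₁ g₂ : ℝ → ℝ) (hg₁c : Continuous g₁) (hg₂c : Continuous g₂)
    (hg₁m : Monotone g₁) (hg₂m : Monotone g₂)
    (β₁ β₂ : EuclideanSpace ℝ (Fin p)) (hβ₁ : ‖β₁‖ = 1) (hβ₂ : ‖β₂‖ = 1)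
    (a₁ a₂ : ℝ)
    (hnc : ¬ ∃ c : ℝ, ∀ x ∈ K, g₁ ⟪β₁, x⟫ = c)
    (heq : ∀ x ∈ K, g₁ ⟪β₁, x⟫ = g₂ ⟪β₂, x⟫)
    (heqa : ∀ x ∈ K, a₁ * g₁ ⟪β₁, x⟫ = a₂ * g₂ ⟪β₂, x⟫)
    (hzero : ∃ t₀ ∈ (fun x => ⟪β₁, x⟫) '' K, g₁ t₀ = 0) :
    β₁ = β₂ ∧ (∀ t ∈ (fun x => ⟪β₁, x⟫) '' K, g₁ t = g₂ t) ∧ a₁ = a₂ :=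
  stacked_single_index_identifiability_general p K hKconv hKint g₁ g₂ hg₁c hg₁m hg₂m β₁ β₂ hβ₁ hβ₂
    a₁ a₂ hnc heq heqa
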